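/- Let p be a prime number, G = GL₂(ℚ_p) the group of invertible 2×2 matrices over the p-adic numbers with its p-adic topology, and g = diag(p, 1) ∈ G. Then the scale of g equals p, i.e., the minimum over all compact open subgroups U of G of the index [gUg⁻¹ : gUg⁻¹ ∩ U] is equal to p. -/

import Mathlib

open MeasureTheory Pointwise

variable {G : Type*}

/-- The conjugate subgroup `gUg⁻¹`. -/
def conjSubgroup [Group G] (g : G) (U : Subgroup G) : Subgroup G :=
  U.map (MulAut.conj g).toMonoidHom

/-- A subgroup is compact open if its carrier set is compact and open. -/
def Subgroup.IsCompactOpen [Group G] [TopologicalSpace G] (U : Subgroup G) : Prop :=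
  IsCompact (U : Set G) ∧ IsOpen (U : Set G)

/-- The scale `s(g) = min_U [gUg⁻¹ : gUg⁻¹ ∩ U]`, minimum over compact open subgroups. -/
noncomputable def scale [Group G] [TopologicalSpace G] (g : G) : ℕ :=
  sInf { n : ℕ | ∃ U : Subgroup G, U.IsCompactOpen ∧ n = U.relIndex (conjSubgroup g U) }

/-!
Conjugation by `g = diag(p, 1)` divides the lower-left entry of a matrix by `p` and fixes the
diagonal entries.

Lower bound: for a compact open `U`, the `c` with `[1, 0; c, 1] ∈ U` form a compact open subgroup
of `ℚ_p`; take such an `a ≠ 0` of maximal norm. The elements `[1, 0; j a / p, 1]`, `0 ≤ j < p`, lie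
in `gUg⁻¹`, and lie in pairwise distinct cosets of `U`: the quotient of two of them has lower-left
entry `(k - j) a / p`, of norm `p ‖a‖ > ‖a‖`.

Upper bound: for the principal congruence subgroup `Γ = 1 + p M₂(ℤ_p)`, an element `x ∈ gΓg⁻¹` has
an integral lower-left entry, and `[1, 0; j, 1]⁻¹ x ∈ Γ` where `j` is its residue mod `p`.
-/

theorem mem_conjSubgroup_iff [Group G] {g x : G} {U : Subgroup G} :
    x ∈ conjSubgroup g U ↔ g⁻¹ * x * g ∈ U :=
  Subgroup.mem_map_equiv

theorem isCompact_conjSubgroup [Group G] [TopologicalSpace G] [IsTopologicalGroup G] (g : G)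
    {U : Subgroup G} (hU : IsCompact (U : Set G)) : IsCompact (conjSubgroup g U : Set G) := by
  rw [conjSubgroup, Subgroup.coe_map]
  exact hU.image (by fun_prop : Continuous fun x : G ↦ g * x * g⁻¹)

namespace Subgroup

variable [Group G] {H K : Subgroup G} {ι : Type*}

theorem relIndex_le_card_of_forall_exists_inv_mul_mem [Finite ι] (t : ι → G) (ht : ∀ i, t i ∈ K)
    (hcover : ∀ x ∈ K, ∃ i, (t i)⁻¹ * x ∈ H) : H.relIndex K ≤ Nat.card ι := by
  refine Nat.card_le_card_of_surjective (fun i ↦ (⟨t i, ht i⟩ : K) : ι → K ⧸ H.subgroupOf K) ?_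
  rintro ⟨x, hx⟩
  obtain ⟨i, hi⟩ := hcover x hx
  exact ⟨i, QuotientGroup.eq.mpr hi⟩

theorem card_le_relIndex_of_inv_mul_mem (hHK : H.relIndex K ≠ 0) (t : ι → G) (ht : ∀ i, t i ∈ K)
    (hdistinct : ∀ i j, (t i)⁻¹ * t j ∈ H → i = j) : Nat.card ι ≤ H.relIndex K := by
  have : Finite (K ⧸ H.subgroupOf K) := index_ne_zero_iff_finite.mp hHK
  refine Nat.card_le_card_of_injective (fun i ↦ (⟨t i, ht i⟩ : K) : ι → K ⧸ H.subgroupOf K) ?_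
  exact fun i j hij ↦ hdistinct i j (QuotientGroup.eq.mp hij :)

theorem relIndex_ne_zero_of_isOpen_of_isCompact [TopologicalSpace G] [IsTopologicalGroup G]
    (hH : IsOpen (H : Set G)) (hK : IsCompact (K : Set G)) : H.relIndex K ≠ 0 := by
  have := isCompact_iff_compactSpace.mp hK
  have := quotient_finite_of_isOpen _ (subgroupOf_isOpen K H hH)
  exact index_ne_zero_of_finite

end Subgroup

theorem norm_mul_lt_one_of_lt_of_le {R : Type*} [SeminormedRing R] {a b : R}
    (ha : ‖a‖ < 1) (hb : ‖b‖ ≤ 1) : ‖a * b‖ < 1 :=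
  (norm_mul_le a b).trans_lt (mul_lt_one_of_nonneg_of_lt_one_left (norm_nonneg a) ha hb)

namespace IsUltrametricDist

variable {R : Type*} [SeminormedRing R] [IsUltrametricDist R] {a b : R}

theorem norm_add_lt_one (ha : ‖a‖ < 1) (hb : ‖b‖ < 1) : ‖a + b‖ < 1 :=
  (norm_add_le_max a b).trans_lt (max_lt ha hb)

theorem norm_sub_lt_one (ha : ‖a‖ < 1) (hb : ‖b‖ < 1) : ‖a - b‖ < 1 :=
  sub_eq_add_neg a b ▸ norm_add_lt_one ha (norm_neg b ▸ hb)

end IsUltrametricDist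

open IsUltrametricDist

namespace Matrix

variable {K : Type*} [NormedField K] [IsUltrametricDist K] {n : Type*} [Fintype n] [DecidableEq n]

variable (K n) in
/-- The submonoid `1 + 𝔪 Mₙ(𝒪)`, where `𝔪` is the open unit ball of `K`. -/
def congruenceSubmonoid : Submonoid (Matrix n n K) where
  carrier := {m | ∀ i j, ‖(m - 1) i j‖ < 1}
  one_mem' := by simp
  mul_mem' {m m'} hm hm' i j := by
    rw [show m * m' - 1 = (m - 1) * (m' - 1) + (m - 1) + (m' - 1) by noncomm_ring,
      add_apply, add_apply, mul_apply]
    refine norm_add_lt_one (norm_add_lt_one ?_ (hm i j)) (hm' i j)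
    exact Finset.sum_induction _ (‖·‖ < 1) (fun _ _ ↦ norm_add_lt_one) (by simp)
      fun k _ ↦ norm_mul_lt_one_of_lt_of_le (hm i k) (hm' k j).le

theorem coe_congruenceSubmonoid :
    (congruenceSubmonoid K n : Set (Matrix n n K)) =
      (· - 1) ⁻¹' Set.univ.pi fun _ ↦ Set.univ.pi fun _ ↦ Metric.ball 0 1 := by
  ext m; simp [congruenceSubmonoid]; rfl

theorem isOpen_congruenceSubmonoid : IsOpen (congruenceSubmonoid K n : Set (Matrix n n K)) := by
  rw [coe_congruenceSubmonoid]
  exact (isOpen_set_pi Set.finite_univ fun _ _ ↦ isOpen_set_pi Set.finite_univ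
    fun _ _ ↦ Metric.isOpen_ball).preimage (continuous_id.sub continuous_const)

theorem isCompact_congruenceSubmonoid [ProperSpace K] :
    IsCompact (congruenceSubmonoid K n : Set (Matrix n n K)) := by
  rw [coe_congruenceSubmonoid]
  refine (Homeomorph.subRight (1 : Matrix n n K)).isCompact_preimage.mpr ?_
  exact isCompact_univ_pi fun _ ↦ isCompact_univ_pi fun _ ↦
    Metric.isCompact_of_isClosed_isBounded (isClosed_ball 0 1) Metric.isBounded_ball

theorem inv_mem_congruenceSubmonoid {m : Matrix (Fin 2) (Fin 2) K}
    (hm : m ∈ congruenceSubmonoid K (Fin 2)) : m⁻¹ ∈ congruenceSubmonoid K (Fin 2) := by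
  -- `m⁻¹ = (det m)⁻¹ • adjugate m`, where `det m ≡ 1` has norm `1` and `adjugate m ≡ 1`
  have h00 : ‖m 0 0 - 1‖ < 1 := by simpa using hm 0 0
  have h01 : ‖m 0 1‖ < 1 := by simpa using hm 0 1
  have h10 : ‖m 1 0‖ < 1 := by simpa using hm 1 0
  have h11 : ‖m 1 1 - 1‖ < 1 := by simpa using hm 1 1
  have hdet : ‖m.det - 1‖ < 1 := by
    rw [det_fin_two, show m 0 0 * m 1 1 - m 0 1 * m 1 0 - 1 =
      (m 0 0 - 1) * (m 1 1 - 1) + (m 0 0 - 1) + (m 1 1 - 1) - m 0 1 * m 1 0 by ring]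
    exact norm_sub_lt_one
      (norm_add_lt_one (norm_add_lt_one (norm_mul_lt_one_of_lt_of_le h00 h11.le) h00) h11)
      (norm_mul_lt_one_of_lt_of_le h01 h10.le)
  have hdet_norm : ‖m.det‖ = 1 := by
    rw [← sub_add_cancel m.det 1, norm_add_eq_max_of_norm_ne_norm (by simpa using hdet.ne),
      norm_one, max_eq_right hdet.le]
  have e00 : ‖m 0 0 - m.det‖ < 1 := sub_sub_sub_cancel_right (m 0 0) _ 1 ▸ norm_sub_lt_one h00 hdet
  have e11 : ‖m 1 1 - m.det‖ < 1 := sub_sub_sub_cancel_right (m 1 1) _ 1 ▸ norm_sub_lt_one h11 hdet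
  have hinv : m⁻¹ - 1 = m.det⁻¹ • !![m 1 1 - m.det, -m 0 1; -m 1 0, m 0 0 - m.det] := by
    have : m.det ≠ 0 := norm_ne_zero_iff.mp (by simp [hdet_norm])
    rw [inv_def, Ring.inverse_eq_inv', adjugate_fin_two]
    ext i j; fin_cases i <;> fin_cases j <;> simp <;> field_simp
  intro i j
  rw [hinv, smul_apply, smul_eq_mul, norm_mul, norm_inv, hdet_norm, inv_one, one_mul]
  fin_cases i <;> fin_cases j <;> simp [h01, h10, e00, e11]

variable (K n) in
def principalCongruenceSubgroup : Subgroup (GL n K) := (congruenceSubmonoid K n).units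

theorem isCompactOpen_principalCongruenceSubgroup [ProperSpace K] :
    (principalCongruenceSubgroup K n).IsCompactOpen :=
  ⟨Submonoid.units_isCompact isCompact_congruenceSubmonoid,
    Submonoid.isOpen_units isOpen_congruenceSubmonoid⟩

theorem mem_principalCongruenceSubgroup_fin_two_iff {x : GL (Fin 2) K} :
    x ∈ principalCongruenceSubgroup K (Fin 2) ↔
      (x : Matrix (Fin 2) (Fin 2) K) ∈ congruenceSubmonoid K (Fin 2) :=
  ⟨Submonoid.val_mem_of_mem_units _, fun hx ↦ Submonoid.mem_units_of_val_mem_inv_val_mem _ hx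
    (by rw [coe_units_inv]; exact inv_mem_congruenceSubmonoid hx)⟩

namespace GeneralLinearGroup

@[simps apply]
def lowerLeftHom {R : Type*} [Ring R] : AddChar R (GL (Fin 2) R) where
  toFun x := ⟨!![1, 0; x, 1], !![1, 0; -x, 1], by simp [one_fin_two], by simp [one_fin_two]⟩
  map_zero_eq_one' := by simp [Units.ext_iff, one_fin_two]
  map_add_eq_mul' a b := by simp [Units.ext_iff, add_comm]

theorem continuous_lowerLeftHom {R : Type*} [Ring R] [TopologicalSpace R] [IsTopologicalRing R] :
    Continuous (lowerLeftHom (R := R)) := by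
  simp only [continuous_induced_rng, Function.comp_def, lowerLeftHom_apply,
    Units.embedProduct_apply, Units.inv_mk, continuous_prodMk, MulOpposite.unop_op]
  constructor <;>
  · refine continuous_matrix fun i j ↦ ?_
    fin_cases i <;> fin_cases j <;> simp [continuous_const, continuous_neg, continuous_id']

theorem lowerLeftHom_mem_principalCongruenceSubgroup {c : K} (hc : ‖c‖ < 1) :
    lowerLeftHom c ∈ principalCongruenceSubgroup K (Fin 2) := by
  rw [mem_principalCongruenceSubgroup_fin_two_iff]
  intro i j
  fin_cases i <;> fin_cases j <;> simp [hc]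

theorem coe_inv_mul_mul_apply_of_coe_eq_diagonal {F : Type*} [Field F] {g : GL n F} {d : n → F}
    (hg : (g : Matrix n n F) = diagonal d) (x : GL n F) (i j : n) :
    ((g⁻¹ * x * g : GL n F) : Matrix n n F) i j = (d i)⁻¹ * x i j * d j := by
  have hd : ∀ i, d i ≠ 0 := by
    simpa [hg, det_diagonal, Finset.prod_ne_zero_iff] using g.det_ne_zero
  have hg_inv : ((g⁻¹ : GL n F) : Matrix n n F) = diagonal d⁻¹ := by
    rw [coe_units_inv, hg]
    exact inv_eq_left_inv (by simp [diagonal_mul_diagonal, hd])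
  simp [hg_inv, hg, mul_diagonal, diagonal_mul]

theorem inv_mul_lowerLeftHom_mul_of_coe_eq_diagonal {F : Type*} [Field F] {g : GL (Fin 2) F}
    {a b : F} (hg : (g : Matrix (Fin 2) (Fin 2) F) = diagonal ![a, b]) (c : F) :
    g⁻¹ * lowerLeftHom c * g = lowerLeftHom (a * c / b) := by
  have hab : a ≠ 0 ∧ b ≠ 0 := by simpa [hg] using g.det_ne_zero
  ext i j
  rw [coe_inv_mul_mul_apply_of_coe_eq_diagonal hg]
  fin_cases i <;> fin_cases j <;> simp [hab.1, hab.2]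
  ring

end GeneralLinearGroup

end Matrix

open Matrix Matrix.GeneralLinearGroup

theorem Subgroup.IsCompactOpen.exists_maximal_norm_lowerLeftHom_mem {K : Type*}
    [NontriviallyNormedField K] {U : Subgroup (GL (Fin 2) K)} (hU : U.IsCompactOpen) :
    ∃ a ≠ 0, lowerLeftHom a ∈ U ∧ ∀ c, lowerLeftHom c ∈ U → ‖c‖ ≤ ‖a‖ := by
  set A := lowerLeftHom ⁻¹' (U : Set (GL (Fin 2) K))
  have hA_open : IsOpen A := hU.2.preimage continuous_lowerLeftHom
  have hA_compact : IsCompact A :=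
    (hU.1.image (f := fun x : GL (Fin 2) K ↦ (x : Matrix (Fin 2) (Fin 2) K) 1 0)
      (by fun_prop)).of_isClosed_subset
      ((U.isClosed_of_isOpen hU.2).preimage continuous_lowerLeftHom) fun c hc ↦ ⟨_, hc, by simp⟩
  obtain ⟨a, haA, hmax⟩ := hA_compact.exists_isMaxOn ⟨0, by simp [A]⟩ continuous_norm.continuousOn
  refine ⟨a, ?_, haA, fun c hc ↦ hmax hc⟩
  rintro rfl
  have : A = {0} :=
    Set.eq_singleton_iff_unique_mem.mpr ⟨by simp [A], fun c hc ↦ by simpa using hmax hc⟩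
  exact not_isOpen_singleton (0 : K) (this ▸ hA_open)

section Padic

variable {p : ℕ} [hp : Fact p.Prime] {g : GL (Fin 2) ℚ_[p]}

theorem le_relIndex_conjSubgroup_of_coe_eq_diagonal
    (hg : (g : Matrix (Fin 2) (Fin 2) ℚ_[p]) = diagonal ![(p : ℚ_[p]), 1])
    {U : Subgroup (GL (Fin 2) ℚ_[p])} (hU : U.IsCompactOpen) :
    p ≤ U.relIndex (conjSubgroup g U) := by
  obtain ⟨a, ha, haU, hmax⟩ := hU.exists_maximal_norm_lowerLeftHom_mem
  have hconj (c : ℚ_[p]) : lowerLeftHom (c / p) ∈ conjSubgroup g U ↔ lowerLeftHom c ∈ U := by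
    rw [mem_conjSubgroup_iff, inv_mul_lowerLeftHom_mul_of_coe_eq_diagonal hg,
      mul_div_cancel₀ _ (mod_cast hp.out.ne_zero), div_one]
  refine (Nat.card_fin p).ge.trans (Subgroup.card_le_relIndex_of_inv_mul_mem
    (Subgroup.relIndex_ne_zero_of_isOpen_of_isCompact hU.2 (isCompact_conjSubgroup g hU.1))
    (fun j : Fin p ↦ lowerLeftHom (j * a / p)) (fun j ↦ (hconj _).2 ?_) fun i j hij ↦ ?_)
  · rw [← nsmul_eq_mul, AddChar.map_nsmul_eq_pow]
    exact U.pow_mem haU j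
  · rw [← AddChar.map_neg_eq_inv, ← AddChar.map_add_eq_mul] at hij
    have hle := hmax _ hij
    rw [show -(i * a / p) + j * a / p = a * (((j - i : ℤ) : ℚ_[p]) * (p : ℚ_[p])⁻¹) by
        push_cast; ring, norm_mul, norm_mul, norm_inv, Padic.norm_p, inv_inv,
      mul_le_iff_le_one_right (norm_pos_iff.mpr ha)] at hle
    have hlt : ‖((j - i : ℤ) : ℚ_[p])‖ < 1 := by
      have : (1 : ℝ) < p := mod_cast hp.out.one_lt
      nlinarith [norm_nonneg ((j - i : ℤ) : ℚ_[p])]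
    have := Int.eq_zero_of_dvd_of_natAbs_lt_natAbs (Padic.norm_intCast_lt_one_iff.mp hlt)
      (by omega)
    exact Fin.ext (by omega)

theorem norm_apply_of_mem_conjSubgroup_principalCongruenceSubgroup
    (hg : (g : Matrix (Fin 2) (Fin 2) ℚ_[p]) = diagonal ![(p : ℚ_[p]), 1]) {x : GL (Fin 2) ℚ_[p]}
    (hx : x ∈ conjSubgroup g (principalCongruenceSubgroup ℚ_[p] (Fin 2))) :
    ‖x 0 0 - 1‖ < 1 ∧ ‖x 0 1‖ < 1 ∧ ‖x 1 0‖ ≤ 1 ∧ ‖x 1 1 - 1‖ < 1 := by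
  have hp1 : (1 : ℝ) < p := mod_cast hp.out.one_lt
  rw [mem_conjSubgroup_iff, mem_principalCongruenceSubgroup_fin_two_iff] at hx
  have h i j := hx i j
  simp only [Matrix.sub_apply, coe_inv_mul_mul_apply_of_coe_eq_diagonal hg] at h
  have h00 := h 0 0
  have h01 := h 0 1
  have h10 := h 1 0
  have h11 := h 1 1
  simp [norm_mul, Padic.norm_p] at h00 h01 h10 h11
  rw [mul_right_comm, inv_mul_cancel₀ (mod_cast hp.out.ne_zero), one_mul] at h00
  refine ⟨h00, (le_mul_of_one_le_left (norm_nonneg _) hp1.le).trans_lt h01, ?_, h11⟩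
  have : ‖x 1 0‖ < p := by simpa using (mul_inv_lt_iff₀ (by positivity)).mp h10
  simpa using (Padic.norm_le_pow_iff_norm_lt_pow_add_one (x 1 0) 0).mpr (by simpa using this)

theorem relIndex_principalCongruenceSubgroup_conjSubgroup_le
    (hg : (g : Matrix (Fin 2) (Fin 2) ℚ_[p]) = diagonal ![(p : ℚ_[p]), 1]) :
    (principalCongruenceSubgroup ℚ_[p] (Fin 2)).relIndex
      (conjSubgroup g (principalCongruenceSubgroup ℚ_[p] (Fin 2))) ≤ p := by
  refine (Subgroup.relIndex_le_card_of_forall_exists_inv_mul_mem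
    (fun j : Fin p ↦ lowerLeftHom (j : ℚ_[p])) (fun j ↦ ?_) fun x hx ↦ ?_).trans
    (Nat.card_fin p).le
  · rw [mem_conjSubgroup_iff, inv_mul_lowerLeftHom_mul_of_coe_eq_diagonal hg, div_one]
    exact lowerLeftHom_mem_principalCongruenceSubgroup
      (by exact_mod_cast Padic.norm_natCast_lt_one_iff.mpr (dvd_mul_right p j))
  · obtain ⟨h00, h01, h10, h11⟩ := norm_apply_of_mem_conjSubgroup_principalCongruenceSubgroup hg hx
    set c : ℤ_[p] := ⟨x 1 0, h10⟩
    have hc : ‖x 1 0 - c.zmodRepr‖ < 1 := by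
      simpa [PadicInt.norm_def] using c.norm_sub_zmodRepr_lt_one
    have hj : ‖(c.zmodRepr : ℚ_[p])‖ ≤ 1 := by simpa using Padic.norm_int_le_one c.zmodRepr
    refine ⟨⟨c.zmodRepr, c.zmodRepr_lt_p⟩, ?_⟩
    rw [← AddChar.map_neg_eq_inv, mem_principalCongruenceSubgroup_fin_two_iff]
    intro i j
    fin_cases i <;> fin_cases j <;> simp [vecMul, dotProduct, Fin.sum_univ_two, h00, h01]
    · rw [show -(c.zmodRepr * x 0 0) + x 1 0 = (x 1 0 - c.zmodRepr) - (x 0 0 - 1) * c.zmodRepr by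
        ring]
      exact norm_sub_lt_one hc (norm_mul_lt_one_of_lt_of_le h00 hj)
    · rw [show -(c.zmodRepr * x 0 1) + x 1 1 - 1 = (x 1 1 - 1) - x 0 1 * c.zmodRepr by ring]
      exact norm_sub_lt_one h11 (norm_mul_lt_one_of_lt_of_le h01 hj)

end Padic

/-- The scale of `g = diag(p, 1)` in `GL₂(ℚ_p)` equals `p`. -/
theorem scale_diagonal_GL2_Qp (p : ℕ) [Fact p.Prime]
    (g : GL (Fin 2) ℚ_[p])
    (hg : (g : Matrix (Fin 2) (Fin 2) ℚ_[p]) = Matrix.diagonal ![(p : ℚ_[p]), 1]) :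
    scale g = p := by
  have hΓ := isCompactOpen_principalCongruenceSubgroup (K := ℚ_[p]) (n := Fin 2)
  unfold scale
  apply le_antisymm
  · exact le_trans (Nat.sInf_le ⟨_, hΓ, rfl⟩)
      (relIndex_principalCongruenceSubgroup_conjSubgroup_le hg)
  · refine le_csInf ⟨_, _, hΓ, rfl⟩ ?_
    rintro _ ⟨U, hU, rfl⟩
    exact le_relIndex_conjSubgroup_of_coe_eq_diagonal hg hU
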